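/- Let 0 < a < b and let w be a point of the upper half-plane H², with |w| its Euclidean absolute value as a complex number. Then: d(w, aI) < d(w, bI) if and only if |w| < √(ab); d(w, aI) = d(w, bI) if and only if |w| = √(ab); and d(w, aI) > d(w, bI) if and only if |w| > √(ab). In particular, the equidistant line between aI and bI is the Euclidean semicircle |w| = √(ab), the square hyperbola S_k(aI,bI) lies above it when k > 0, and below it when k < 0. -/

import Mathlib

/-!
Since `cosh d(w, cI) = (|w|² + c²) / (2 c Im w)`, one gets
`cosh d(w, bI) - cosh d(w, aI) = (b - a)(ab - |w|²) / (2ab Im w)`, and `cosh` is strictly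
increasing on `[0, ∞)`; so comparing the two distances amounts to comparing `|w|²` with `ab`.
-/

open UpperHalfPlane

noncomputable section

/-- The point of the upper half-plane with complex coordinate `a·i`, for `a > 0`. -/
def ptI (a : ℝ) (ha : 0 < a) : UpperHalfPlane := ⟨a * Complex.I, by simpa using ha⟩

lemma cosh_dist_ptI (w : ℍ) (c : ℝ) (hc : 0 < c) :
    Real.cosh (dist w (ptI c hc)) = (‖(w : ℂ)‖ ^ 2 + c ^ 2) / (2 * w.im * c) := by
  have hre : (ptI c hc).re = 0 := by simp [ptI, UpperHalfPlane.re]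
  have him : (ptI c hc).im = c := by simp [ptI, UpperHalfPlane.im]
  rw [cosh_dist', hre, him, Complex.sq_norm, Complex.normSq_apply, coe_re, coe_im]
  ring

lemma cosh_dist_ptI_sub_cosh_dist_ptI (w : ℍ) {a b : ℝ} (ha : 0 < a) (hb : 0 < b) :
    Real.cosh (dist w (ptI b hb)) - Real.cosh (dist w (ptI a ha)) =
      (b - a) * (a * b - ‖(w : ℂ)‖ ^ 2) / (2 * w.im * a * b) := by
  rw [cosh_dist_ptI, cosh_dist_ptI]
  field_simp [w.im_pos.ne']
  ring

lemma dist_ptI_lt_dist_ptI_iff (w : ℍ) {a b : ℝ} (ha : 0 < a) (hb : 0 < b) :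
    dist w (ptI a ha) < dist w (ptI b hb) ↔ 0 < (b - a) * (a * b - ‖(w : ℂ)‖ ^ 2) := by
  have hden : 0 < 2 * w.im * a * b := by have := w.im_pos; positivity
  rw [← Real.cosh_strictMonoOn.lt_iff_lt (Set.mem_Ici.2 dist_nonneg) (Set.mem_Ici.2 dist_nonneg),
    ← sub_pos, cosh_dist_ptI_sub_cosh_dist_ptI, div_pos_iff_of_pos_right hden]

theorem dist_comparison_imaginary_points (a b : ℝ) (ha : 0 < a) (hab : a < b)
    (w : UpperHalfPlane) :
    (dist w (ptI a ha) < dist w (ptI b (ha.trans hab)) ↔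
        ‖(w : ℂ)‖ < Real.sqrt (a * b)) ∧
    (dist w (ptI a ha) = dist w (ptI b (ha.trans hab)) ↔
        ‖(w : ℂ)‖ = Real.sqrt (a * b)) ∧
    (dist w (ptI b (ha.trans hab)) < dist w (ptI a ha) ↔
        Real.sqrt (a * b) < ‖(w : ℂ)‖) := by
  have hba : 0 < b - a := sub_pos.2 hab
  have hcloser : dist w (ptI a ha) < dist w (ptI b (ha.trans hab)) ↔
      ‖(w : ℂ)‖ < Real.sqrt (a * b) := by
    rw [dist_ptI_lt_dist_ptI_iff, mul_pos_iff_of_pos_left hba, sub_pos,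
      Real.lt_sqrt (norm_nonneg _)]
  have hfarther : dist w (ptI b (ha.trans hab)) < dist w (ptI a ha) ↔
      Real.sqrt (a * b) < ‖(w : ℂ)‖ := by
    rw [dist_ptI_lt_dist_ptI_iff,
      show (a - b) * (b * a - ‖(w : ℂ)‖ ^ 2) = (b - a) * (‖(w : ℂ)‖ ^ 2 - a * b) by
        ring,
      mul_pos_iff_of_pos_left hba, sub_pos,
      Real.sqrt_lt (mul_pos ha (ha.trans hab)).le (norm_nonneg _)]
  exact ⟨hcloser, eq_iff_eq_of_lt_iff_lt_of_gt_iff_gt hcloser hfarther, hfarther⟩
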